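/- arXiv:1511.05120 — 3 statements merged into one kernel-verified Lean document; each statement's English description precedes it below -/
import Mathlib

section
/- The k-bases of a finite CW complex X (subsets T of k-cells maximal with Z_k(X_T; Z/2) = 0) are exactly the bases of the matroid represented over Z/2 by the columns of the boundary matrix ∂_k; in particular all k-bases have the same cardinality. -/
/-- `Z_k(X_S) = 0`: no nonzero `k`-cycle supported on the set `S` of `k`-cells. -/
def ZkTrivial {Ck Ck1 : Type*} [Fintype Ck] [Fintype Ck1]
    (bd : (Ck → ZMod 2) →ₗ[ZMod 2] (Ck1 → ZMod 2)) (S : Set Ck) : Prop :=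
  ∀ c : Ck → ZMod 2, (∀ x ∉ S, c x = 0) → bd c = 0 → c = 0

/-- A `k`-base: a set of `k`-cells maximal with `Z_k(X_T) = 0`. -/
def IsKBase {Ck Ck1 : Type*} [Fintype Ck] [Fintype Ck1]
    (bd : (Ck → ZMod 2) →ₗ[ZMod 2] (Ck1 → ZMod 2)) (T : Set Ck) : Prop :=
  ZkTrivial bd T ∧ ∀ T' : Set Ck, T ⊆ T' → ZkTrivial bd T' → T' = T

/-- Independence of the columns of the boundary matrix `∂_k` indexed by `S`. -/
def ColIndep {Ck Ck1 : Type*} [Fintype Ck] [Fintype Ck1] [DecidableEq Ck]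
    (bd : (Ck → ZMod 2) →ₗ[ZMod 2] (Ck1 → ZMod 2)) (S : Set Ck) : Prop :=
  LinearIndependent (ZMod 2) (fun s : S => bd (Pi.single (s : Ck) 1))

/-!
A linear combination of the columns `f (Pi.single i 1)` with coefficient vector `c` is `f c`, so
a nonzero cycle supported on `S` is exactly a linear dependence among the columns indexed by `S`.
Hence `k`-bases are the maximal independent sets of columns. Such a set spans the column space
`range ∂_k`, so its cardinality is the rank of `∂_k`.
-/

open Submodule Set

theorem Finsupp.linearCombination_pi_single_one {R ι : Type*} [Semiring R] [DecidableEq ι]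
    (l : ι →₀ R) :
    Finsupp.linearCombination R (fun i : ι => (Pi.single i 1 : ι → R)) l = ⇑l := by
  ext j
  simp [Finsupp.linearCombination_apply, Finsupp.sum, Pi.single_apply]

namespace LinearMap

variable {R ι M : Type*} [Ring R] [AddCommGroup M] [Module R M] [Finite ι] [DecidableEq ι]
  (f : (ι → R) →ₗ[R] M)

theorem linearIndepOn_single_one_iff (s : Set ι) :
    LinearIndepOn R (fun i => f (Pi.single i 1)) s ↔
      ∀ c : ι → R, (∀ i ∉ s, c i = 0) → f c = 0 → c = 0 := by
  have hcomb (l : ι →₀ R) :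
      Finsupp.linearCombination R (fun i => f (Pi.single i 1)) l = f ⇑l := by
    rw [← Finsupp.linearCombination_pi_single_one l, Finsupp.apply_linearCombination]
    rfl
  rw [linearIndepOn_iff, Finsupp.equivFunOnFinite.symm.forall_congr_left]
  simp only [Finsupp.mem_supported, Finsupp.support_subset_iff, hcomb, Finsupp.ext_iff,
    funext_iff]
  rfl

theorem span_range_single_one : span R (Set.range fun i => f (Pi.single i 1)) = range f := by
  rw [range_eq_map, ← (Pi.basisFun R ι).span_eq, map_span, ← Set.range_comp]
  simp [Function.comp_def]

end LinearMap

section Maximal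

variable {K ι V : Type*} [DivisionRing K] [AddCommGroup V] [Module K V] {v : ι → V} {s : Set ι}

theorem LinearIndepOn.span_image_eq_span_range_of_maximal (hs : LinearIndepOn K v s)
    (hmax : ∀ t : Set ι, s ⊆ t → LinearIndepOn K v t → t = s) :
    span K (v '' s) = span K (range v) := by
  refine le_antisymm (span_mono (image_subset_range v s)) (span_le.2 ?_)
  rintro _ ⟨i, rfl⟩
  exact hs.mem_span_iff.2 fun hi => hmax _ (subset_insert i s) hi ▸ mem_insert i s

theorem LinearIndepOn.encard_eq_toENat_rank_of_maximal (hs : LinearIndepOn K v s)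
    (hmax : ∀ t : Set ι, s ⊆ t → LinearIndepOn K v t → t = s) :
    s.encard = (Module.rank K (span K (range v))).toENat := by
  rw [← hs.span_image_eq_span_range_of_maximal hmax, toENat_rank_span_set hs]

end Maximal

section KBase

variable {Ck Ck1 : Type*} [Fintype Ck] [Fintype Ck1] [DecidableEq Ck]
  {bd : (Ck → ZMod 2) →ₗ[ZMod 2] (Ck1 → ZMod 2)} {T : Set Ck}

theorem zkTrivial_iff_colIndep : ZkTrivial bd T ↔ ColIndep bd T :=
  (bd.linearIndepOn_single_one_iff T).symm

theorem isKBase_iff :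
    IsKBase bd T ↔ ColIndep bd T ∧ ∀ T' : Set Ck, T ⊆ T' → ColIndep bd T' → T' = T := by
  simp only [IsKBase, zkTrivial_iff_colIndep]

theorem IsKBase.encard_eq_toENat_rank (hT : IsKBase bd T) :
    T.encard = (Module.rank (ZMod 2) (LinearMap.range bd)).toENat := by
  obtain ⟨hind, hmax⟩ := isKBase_iff.1 hT
  rw [← bd.span_range_single_one]
  exact LinearIndepOn.encard_eq_toENat_rank_of_maximal hind hmax

end KBase

/-- The `k`-bases of a finite CW complex are exactly the bases (maximal independent
sets) of the matroid represented over `ℤ/2` by the columns of the boundary matrix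
`∂_k`; in particular all `k`-bases have the same cardinality. -/
theorem stmt_7 {Ck Ck1 : Type*} [Fintype Ck] [Fintype Ck1] [DecidableEq Ck]
    (bd : (Ck → ZMod 2) →ₗ[ZMod 2] (Ck1 → ZMod 2)) :
    (∀ T : Set Ck, IsKBase bd T ↔
      (ColIndep bd T ∧ ∀ T' : Set Ck, T ⊆ T' → ColIndep bd T' → T' = T)) ∧
    (∀ T T' : Set Ck, IsKBase bd T → IsKBase bd T' → T.ncard = T'.ncard) := by
  refine ⟨fun T => isKBase_iff, fun T T' hT hT' => ?_⟩
  rw [Set.ncard_def, Set.ncard_def, hT.encard_eq_toENat_rank, hT'.encard_eq_toENat_rank]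
end

section
/- A simple random walk on Z^2 started at the origin is recurrent: it returns to the origin with probability 1. -/
/-!
Let `u n` be the probability that the walk is at the origin at time `n`, and `f k` the
probability that its first return to the origin happens at time `k + 1`. Cutting a path that is
at the origin at time `n + 1` at its first return, and using that the later steps are independent
of the earlier ones and distributed like a fresh walk, gives the renewal inequality
`u (n + 1) ≤ ∑ k ≤ n, f k * u (n - k)`. Summing it, the partial sums `U` of `u` satisfy
`U ≤ 1 + (∑ f) * U`, so a return probability `∑ f < 1` would keep `∑ u` finite.

For the planar walk, the rotation `(a, b) ↦ (a + b, a - b)` maps the four steps to `(±1, ±1)`,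
which splits the walk into two independent simple walks on `ℤ`. Hence
`u (2 n) = (C(2n, n) / 4 ^ n) ^ 2 ≥ 1 / (4 n)` and `∑ u` diverges like the harmonic series.
-/

open MeasureTheory ProbabilityTheory Finset
open scoped ENNReal NNReal

def signWalkCount : ℕ → ℤ → ℕ
  | 0, k => if k = 0 then 1 else 0
  | n + 1, k => signWalkCount n (k - 1) + signWalkCount n (k + 1)

def latticeWalkCount : ℕ → ℤ × ℤ → ℕ
  | 0, v => if v = 0 then 1 else 0
  | n + 1, v => latticeWalkCount n (v - (1, 0)) + latticeWalkCount n (v + (1, 0)) +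
      latticeWalkCount n (v - (0, 1)) + latticeWalkCount n (v + (0, 1))

theorem signWalkCount_eq_zero_of_lt_neg : ∀ {n : ℕ} {k : ℤ}, k < -n → signWalkCount n k = 0
  | 0, k, hk => by simp [signWalkCount]; omega
  | n + 1, k, hk => by
    rw [signWalkCount, signWalkCount_eq_zero_of_lt_neg (by omega),
      signWalkCount_eq_zero_of_lt_neg (by omega)]

theorem signWalkCount_two_mul_sub (n j : ℕ) : signWalkCount n (2 * j - n) = n.choose j := by
  induction n generalizing j with
  | zero => cases j <;> simp [signWalkCount]; omega
  | succ n ih =>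
    rw [signWalkCount]
    cases j with
    | zero =>
      rw [signWalkCount_eq_zero_of_lt_neg (by omega),
        show 2 * ((0 : ℕ) : ℤ) - (n + 1 : ℕ) + 1 = 2 * (0 : ℕ) - n by push_cast; ring, ih]
      simp
    | succ j =>
      rw [show 2 * ((j + 1 : ℕ) : ℤ) - (n + 1 : ℕ) - 1 = 2 * j - n by push_cast; ring,
        show 2 * ((j + 1 : ℕ) : ℤ) - (n + 1 : ℕ) + 1 = 2 * (j + 1 : ℕ) - n by push_cast; ring,
        ih, ih, Nat.choose_succ_succ]

theorem latticeWalkCount_eq_mul (n : ℕ) (a b : ℤ) :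
    latticeWalkCount n (a, b) = signWalkCount n (a + b) * signWalkCount n (a - b) := by
  induction n generalizing a b with
  | zero =>
    simp only [latticeWalkCount, signWalkCount, Prod.mk_eq_zero]
    split_ifs <;> omega
  | succ n ih =>
    simp only [latticeWalkCount, signWalkCount, Prod.mk_sub_mk, Prod.mk_add_mk, ih]
    ring_nf

theorem latticeWalkCount_two_mul_zero (n : ℕ) :
    latticeWalkCount (2 * n) 0 = n.centralBinom ^ 2 := by
  have h := signWalkCount_two_mul_sub (2 * n) n
  push_cast at h
  rw [sub_self, ← Nat.centralBinom_eq_two_mul_choose] at h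
  rw [← Prod.mk_zero_zero, latticeWalkCount_eq_mul, add_zero, sub_zero, h, sq]

theorem sixteen_pow_le_four_mul_mul_centralBinom_sq {n : ℕ} (hn : 0 < n) :
    16 ^ n ≤ 4 * n * n.centralBinom ^ 2 := by
  induction n with
  | zero => omega
  | succ n ih =>
    rcases n.eq_zero_or_pos with rfl | hn
    · decide
    have hrec : (n + 1) ^ 2 * (n + 1).centralBinom ^ 2 =
        (2 * (2 * n + 1)) ^ 2 * n.centralBinom ^ 2 := by
      rw [← mul_pow, ← mul_pow, Nat.succ_mul_centralBinom_succ]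
    refine Nat.le_of_mul_le_mul_left ?_ n.succ_pos
    calc (n + 1) * 16 ^ (n + 1) = 16 * (n + 1) * 16 ^ n := by ring
      _ ≤ 16 * (n + 1) * (4 * n * n.centralBinom ^ 2) := by gcongr; exact ih hn
      _ = 16 * (4 * n * (n + 1)) * n.centralBinom ^ 2 := by ring
      _ ≤ 16 * (2 * n + 1) ^ 2 * n.centralBinom ^ 2 := by gcongr; nlinarith
      _ = (n + 1) * (4 * (n + 1) * (n + 1).centralBinom ^ 2) := by
        linear_combination (4 : ℕ) * hrec.symm

theorem tsum_inv_four_mul_succ_eq_top : ∑' m : ℕ, ((4 * (m + 1) : ℕ) : ℝ≥0∞)⁻¹ = ∞ := by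
  have hnot : ¬ Summable fun m : ℕ => ((((4 * (m + 1) : ℕ) : ℝ≥0)⁻¹ : ℝ≥0) : ℝ) := by
    intro h
    refine Real.not_summable_one_div_natCast ((summable_nat_add_iff 1).1 ?_)
    refine (h.mul_left 4).congr fun m => ?_
    simp only [NNReal.coe_inv, NNReal.coe_natCast]
    push_cast
    field_simp
  convert ENNReal.tsum_coe_eq_top_iff_not_summable_coe.2 hnot using 3 with m
  rw [ENNReal.coe_inv (by positivity)]
  rfl

theorem tsum_latticeWalkCount_zero_div_eq_top :
    ∑' n, (latticeWalkCount n 0 : ℝ≥0∞) / 4 ^ n = ∞ := by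
  have hlb (m : ℕ) : ((4 * (m + 1) : ℕ) : ℝ≥0∞)⁻¹ ≤
      latticeWalkCount (2 * (m + 1)) 0 / 4 ^ (2 * (m + 1)) := by
    rw [latticeWalkCount_two_mul_zero, pow_mul, ENNReal.le_div_iff_mul_le (by simp) (by simp),
      ENNReal.inv_mul_le_iff (by simp) (ENNReal.natCast_ne_top _)]
    exact_mod_cast sixteen_pow_le_four_mul_mul_centralBinom_sq m.succ_pos
  refine top_le_iff.1 ?_
  calc ∞ = ∑' m : ℕ, ((4 * (m + 1) : ℕ) : ℝ≥0∞)⁻¹ := tsum_inv_four_mul_succ_eq_top.symm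
    _ ≤ ∑' m, (latticeWalkCount (2 * (m + 1)) 0 : ℝ≥0∞) / 4 ^ (2 * (m + 1)) :=
      ENNReal.tsum_le_tsum hlb
    _ ≤ ∑' n, (latticeWalkCount n 0 : ℝ≥0∞) / 4 ^ n :=
      ENNReal.tsum_comp_le_tsum_of_injective (fun a b h => by simpa using h) _

theorem one_le_tsum_of_renewal {u f : ℕ → ℝ≥0∞} (hu₀ : u 0 ≤ 1) (hu : ∀ n, u n ≠ ∞)
    (hrenewal : ∀ n, u (n + 1) ≤ ∑ k ∈ range (n + 1), f k * u (n - k))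
    (hdiv : ∑' n, u n = ∞) : 1 ≤ ∑' k, f k := by
  set F := ∑' k, f k
  by_contra! hF
  have hpartial (N : ℕ) : ∑ n ∈ range (N + 1), u n ≤ 1 + F * ∑ n ∈ range (N + 1), u n :=
    calc ∑ n ∈ range (N + 1), u n = u 0 + ∑ n ∈ range N, u (n + 1) := by
          rw [sum_range_succ', add_comm]
      _ ≤ 1 + ∑ n ∈ range N, ∑ k ∈ range (n + 1), f k * u (n - k) :=
          add_le_add hu₀ (sum_le_sum fun n _ => hrenewal n)
      _ = 1 + ∑ k ∈ range N, f k * ∑ j ∈ range (N - k), u j := by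
          rw [sum_range_diag_flip N fun k j => f k * u j]
          simp only [mul_sum]
      _ ≤ 1 + ∑ k ∈ range N, f k * ∑ n ∈ range (N + 1), u n := by
          gcongr 1 + ∑ k ∈ range N, f k * ?_ with k
          exact sum_le_sum_of_subset (range_subset_range.2 (by omega))
      _ ≤ 1 + F * ∑ n ∈ range (N + 1), u n := by
          rw [← sum_mul]
          gcongr
          exact ENNReal.sum_le_tsum _
  have hbound (N : ℕ) : ∑ n ∈ range N, u n ≤ (1 - F)⁻¹ := by
    have hfin : ∑ n ∈ range (N + 1), u n ≠ ∞ := ENNReal.sum_ne_top.2 fun n _ => hu n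
    calc ∑ n ∈ range N, u n ≤ ∑ n ∈ range (N + 1), u n := sum_le_sum_of_subset (by simp)
      _ ≤ (1 - F)⁻¹ := by
        rw [ENNReal.le_inv_iff_mul_le, mul_comm, ENNReal.sub_mul fun _ _ => hfin, one_mul]
        exact tsub_le_iff_right.2 (hpartial N)
  have hne : (1 - F)⁻¹ ≠ ∞ := ENNReal.inv_ne_top.2 (tsub_pos_iff_lt.2 hF).ne'
  exact hne (top_le_iff.1 (hdiv ▸ ENNReal.tsum_le_of_sum_range_le hbound))

section FirstReturn

variable {Ω G : Type*} [AddCommMonoid G] {X : ℕ → Ω → G}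

def firstReturnSet (X : ℕ → Ω → G) (m : ℕ) : Set Ω :=
  {ω | ∑ i ∈ range m, X i ω = 0 ∧ ∀ j, 0 < j → j < m → ∑ i ∈ range j, X i ω ≠ 0}

theorem exists_mem_firstReturnSet {n : ℕ} {ω : Ω} (hn : 0 < n)
    (h : ∑ i ∈ range n, X i ω = 0) : ∃ k < n, ω ∈ firstReturnSet X (k + 1) := by
  classical
  have hex : ∃ m, 0 < m ∧ ∑ i ∈ range m, X i ω = 0 := ⟨n, hn, h⟩
  have hmin := Nat.find_spec hex
  have hle : Nat.find hex ≤ n := Nat.find_min' hex ⟨hn, h⟩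
  refine ⟨Nat.find hex - 1, by omega, ?_⟩
  rw [Nat.sub_add_cancel hmin.1]
  exact ⟨hmin.2, fun j hj hjm hj0 => Nat.find_min hex hjm ⟨hj, hj0⟩⟩

theorem setOf_exists_sum_eq_zero_eq_iUnion :
    {ω | ∃ n > 0, ∑ i ∈ range n, X i ω = 0} = ⋃ k, firstReturnSet X (k + 1) := by
  ext ω
  simp only [Set.mem_ofPred_eq, Set.mem_iUnion]
  constructor
  · rintro ⟨n, hn, h⟩
    obtain ⟨k, -, hk⟩ := exists_mem_firstReturnSet hn h
    exact ⟨k, hk⟩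
  · rintro ⟨k, hk, -⟩
    exact ⟨k + 1, k.succ_pos, hk⟩

theorem pairwise_disjoint_firstReturnSet :
    Pairwise (Function.onFun Disjoint fun k => firstReturnSet X (k + 1)) := by
  intro k l hkl
  wlog h : k < l generalizing k l
  · exact (this hkl.symm (by omega)).symm
  exact Set.disjoint_left.2 fun ω hk hl => hl.2 (k + 1) k.succ_pos (by omega) hk.1

theorem setOf_sum_eq_zero_subset_iUnion (n : ℕ) :
    {ω | ∑ i ∈ range (n + 1), X i ω = 0} ⊆
      ⋃ k ∈ range (n + 1),
        firstReturnSet X (k + 1) ∩ {ω | ∑ i ∈ range (n - k), X (k + 1 + i) ω = 0} := by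
  intro ω h
  obtain ⟨k, hk, hret⟩ := exists_mem_firstReturnSet n.succ_pos h
  refine Set.mem_biUnion (mem_range.2 hk) ⟨hret, ?_⟩
  have hsplit := sum_range_add (fun i => X i ω) (k + 1) (n - k)
  rw [show k + 1 + (n - k) = n + 1 by omega, hret.1, zero_add] at hsplit
  exact hsplit.symm.trans h

end FirstReturn

section IIDSteps

variable {Ω G : Type*} {mΩ : MeasurableSpace Ω} {μ : Measure Ω}
  [AddCommMonoid G] {mG : MeasurableSpace G} [MeasurableAdd₂ G] {X : ℕ → Ω → G}

theorem measurable_sum_iSup_comap {S : Set ℕ} {s : Finset ℕ} {f : ℕ → ℕ}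
    (hs : ∀ i ∈ s, f i ∈ S) :
    Measurable[⨆ i ∈ S, mG.comap (X i)] fun ω => ∑ i ∈ s, X (f i) ω :=
  Finset.measurable_sum s fun i hi =>
    Measurable.of_comap_le (le_iSup₂ (f := fun i _ => mG.comap (X i)) (f i) (hs i hi))

theorem identDistrib_sum_range_add (hindep : iIndepFun X μ)
    (hident : ∀ i, IdentDistrib (X i) (X 0) μ μ) (m l : ℕ) :
    IdentDistrib (fun ω => ∑ i ∈ range l, X (m + i) ω) (fun ω => ∑ i ∈ range l, X i ω) μ μ :=
  (IdentDistrib.pi (fun i => (hident (m + i)).trans (hident i).symm)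
      (hindep.precomp (add_right_injective m)) hindep).comp
    (Finset.measurable_sum _ fun i _ => measurable_pi_apply i)

variable [MeasurableSingletonClass G]

theorem measurableSet_firstReturnSet_iSup (m : ℕ) :
    MeasurableSet[⨆ i ∈ Set.Iio m, mG.comap (X i)] (firstReturnSet X m) := by
  have hsum {j : ℕ} (hj : j ≤ m) :
      MeasurableSet[⨆ i ∈ Set.Iio m, mG.comap (X i)] {ω | ∑ i ∈ range j, X i ω = 0} :=
    measurable_sum_iSup_comap (f := id) (fun i hi => by simp at hi ⊢; omega)
      (measurableSet_singleton 0)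
  simp only [firstReturnSet, Set.ofPred_and, Set.ofPred_forall]
  exact (hsum le_rfl).inter <| MeasurableSet.iInter fun j => MeasurableSet.iInter fun _ =>
    MeasurableSet.iInter fun hj => (hsum hj.le).compl

theorem measurableSet_firstReturnSet (hmeas : ∀ i, Measurable (X i)) (m : ℕ) :
    MeasurableSet (firstReturnSet X m) :=
  iSup₂_le (fun i _ => (hmeas i).comap_le) _ (measurableSet_firstReturnSet_iSup m)

theorem measure_firstReturnSet_inter (hmeas : ∀ i, Measurable (X i)) (hindep : iIndepFun X μ)
    (m l : ℕ) (v : G) :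
    μ (firstReturnSet X m ∩ {ω | ∑ i ∈ range l, X (m + i) ω = v}) =
      μ (firstReturnSet X m) * μ {ω | ∑ i ∈ range l, X (m + i) ω = v} :=
  (Indep_iff _ _ μ).1 (indep_iSup_of_disjoint (fun i => (hmeas i).comap_le) hindep.iIndep
      (Set.Iio_disjoint_Ici le_rfl)) _ _ (measurableSet_firstReturnSet_iSup m)
    (measurable_sum_iSup_comap (fun i _ => by simp) (measurableSet_singleton v))

theorem measure_sum_range_succ_eq_zero_le (hmeas : ∀ i, Measurable (X i))
    (hindep : iIndepFun X μ) (hident : ∀ i, IdentDistrib (X i) (X 0) μ μ) (n : ℕ) :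
    μ {ω | ∑ i ∈ range (n + 1), X i ω = 0} ≤
      ∑ k ∈ range (n + 1),
        μ (firstReturnSet X (k + 1)) * μ {ω | ∑ i ∈ range (n - k), X i ω = 0} :=
  calc μ {ω | ∑ i ∈ range (n + 1), X i ω = 0}
      ≤ μ (⋃ k ∈ range (n + 1),
          firstReturnSet X (k + 1) ∩ {ω | ∑ i ∈ range (n - k), X (k + 1 + i) ω = 0}) :=
        measure_mono (setOf_sum_eq_zero_subset_iUnion n)
    _ ≤ ∑ k ∈ range (n + 1),
          μ (firstReturnSet X (k + 1) ∩ {ω | ∑ i ∈ range (n - k), X (k + 1 + i) ω = 0}) :=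
        measure_biUnion_finset_le _ _
    _ = _ := by
        refine sum_congr rfl fun k _ => ?_
        rw [measure_firstReturnSet_inter hmeas hindep]
        exact congrArg _ ((identDistrib_sum_range_add hindep hident (k + 1) (n - k)).measure_mem_eq
          (measurableSet_singleton 0))

theorem measure_setOf_exists_sum_eq_zero_eq_one [IsProbabilityMeasure μ]
    (hmeas : ∀ i, Measurable (X i)) (hindep : iIndepFun X μ)
    (hident : ∀ i, IdentDistrib (X i) (X 0) μ μ)
    (hdiv : ∑' n, μ {ω | ∑ i ∈ range n, X i ω = 0} = ∞) :
    μ {ω | ∃ n > 0, ∑ i ∈ range n, X i ω = 0} = 1 := by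
  refine le_antisymm prob_le_one ?_
  rw [setOf_exists_sum_eq_zero_eq_iUnion, measure_iUnion pairwise_disjoint_firstReturnSet
    fun k => measurableSet_firstReturnSet hmeas (k + 1)]
  exact one_le_tsum_of_renewal prob_le_one (fun n => measure_ne_top μ _)
    (measure_sum_range_succ_eq_zero_le hmeas hindep hident) hdiv

end IIDSteps

theorem ProbabilityTheory.IndepFun.measure_add_eq_lintegral {Ω G : Type*} {mΩ : MeasurableSpace Ω}
    {μ : Measure Ω} [IsFiniteMeasure μ] [AddGroup G] {mG : MeasurableSpace G} [MeasurableAdd₂ G]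
    [MeasurableSingletonClass G] {T Y : Ω → G} (h : IndepFun T Y μ) (hT : Measurable T)
    (hY : Measurable Y) (v : G) :
    μ {ω | T ω + Y ω = v} = ∫⁻ s, μ {ω | T ω = v - s} ∂(μ.map Y) := by
  have hv : MeasurableSet {p : G × G | p.1 + p.2 = v} := measurable_add (measurableSet_singleton v)
  calc μ {ω | T ω + Y ω = v} = μ.map (fun ω => (T ω, Y ω)) {p | p.1 + p.2 = v} := by
        rw [Measure.map_apply (hT.prodMk hY) hv]; rfl
    _ = ((μ.map T).prod (μ.map Y)) {p | p.1 + p.2 = v} := by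
        rw [(indepFun_iff_map_prod_eq_prod_map_map hT.aemeasurable hY.aemeasurable).1 h]
    _ = ∫⁻ s, μ.map T {t | t + s = v} ∂(μ.map Y) := Measure.prod_apply_symm hv
    _ = ∫⁻ s, μ {ω | T ω = v - s} ∂(μ.map Y) := by
        congr! 2 with s
        have hs : {t | t + s = v} = {v - s} := by ext; simp [eq_sub_iff_add_eq]
        rw [hs, Measure.map_apply hT (measurableSet_singleton _)]
        rfl

noncomputable def srwStep : Measure (ℤ × ℤ) :=
  (4 : ℝ≥0∞)⁻¹ • (Measure.dirac (1, 0) + Measure.dirac (-1, 0) +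
    Measure.dirac (0, 1) + Measure.dirac (0, -1))

theorem lintegral_srwStep (g : ℤ × ℤ → ℝ≥0∞) :
    ∫⁻ s, g s ∂srwStep = (g (1, 0) + g (-1, 0) + g (0, 1) + g (0, -1)) / 4 := by
  simp only [srwStep, lintegral_smul_measure, lintegral_add_measure, lintegral_dirac, smul_eq_mul]
  rw [ENNReal.div_eq_inv_mul]

theorem measure_sum_range_eq_latticeWalkCount {Ω : Type*} {mΩ : MeasurableSpace Ω}
    {μ : Measure Ω} [IsProbabilityMeasure μ] {X : ℕ → Ω → ℤ × ℤ}
    (hmeas : ∀ i, Measurable (X i)) (hindep : iIndepFun X μ)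
    (hlaw : ∀ i, μ.map (X i) = srwStep) (n : ℕ) (v : ℤ × ℤ) :
    μ {ω | ∑ i ∈ range n, X i ω = v} = latticeWalkCount n v / 4 ^ n := by
  induction n generalizing v with
  | zero => by_cases hv : v = 0 <;> simp [latticeWalkCount, hv, eq_comm]
  | succ n ih =>
    have hind : IndepFun (fun ω => ∑ i ∈ range n, X i ω) (X n) μ := by
      simpa only [Finset.sum_fn] using hindep.indepFun_sum_range_succ hmeas n
    have hadd := hind.measure_add_eq_lintegral (Finset.measurable_sum _ fun i _ => hmeas i)
      (hmeas n) v
    simp only [sum_range_succ, hadd, hlaw, lintegral_srwStep, ih, latticeWalkCount]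
    rw [show v - (-1, 0) = v + (1, 0) by simp [sub_eq_add_neg],
      show v - (0, -1) = v + (0, 1) by simp [sub_eq_add_neg]]
    simp only [Nat.cast_add, pow_succ, ENNReal.div_eq_inv_mul]
    rw [ENNReal.mul_inv (by simp) (by simp)]
    ring

/-- Simple random walk on `ℤ²` is recurrent: if the steps `X i` are i.i.d. uniform on
the four nearest-neighbour displacements, then the walk started at the origin returns
to the origin with probability 1. -/
theorem stmt_11 {Ω : Type*} [MeasurableSpace Ω] (μ : Measure Ω) [IsProbabilityMeasure μ]
    (X : ℕ → Ω → ℤ × ℤ) (hmeas : ∀ i, Measurable (X i))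
    (hindep : iIndepFun X μ)
    (hdist : ∀ i, Measure.map (X i) μ =
      (4 : ENNReal)⁻¹ • (Measure.dirac ((1 : ℤ), (0 : ℤ)) + Measure.dirac (-1, 0) +
        Measure.dirac (0, 1) + Measure.dirac (0, -1))) :
    μ {ω | ∃ n > 0, ∑ i ∈ Finset.range n, X i ω = 0} = 1 := by
  have hident (i : ℕ) : IdentDistrib (X i) (X 0) μ μ :=
    ⟨(hmeas i).aemeasurable, (hmeas 0).aemeasurable, (hdist i).trans (hdist 0).symm⟩
  refine measure_setOf_exists_sum_eq_zero_eq_one hmeas hindep hident ?_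
  simp_rw [measure_sum_range_eq_latticeWalkCount hmeas hindep hdist]
  exact tsum_latticeWalkCount_zero_div_eq_top
end

section
/- For the cubical complex Q_n (the 2-skeleton of the CW structure X_n on S^3 with n^3 cubical 3-cells plus one outer cell), every 2-tree of Q_n contains the entire 1-skeleton of Q_n. -/
open scoped Classical

namespace Stmt16

variable (n : ℕ)

/-- Vertices of the cubical complex `Q_n`: lattice points `(a,b,c)` with
`0 ≤ a,b,c ≤ n+1`. -/
abbrev Vtx := Fin 3 → Fin (n + 2)

/-- An edge of `Q_n`: a base vertex together with a direction `d` in which there is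
room to move (the edge goes from `v` to `v + e_d`). -/
def EdgeCell := {p : Vtx n × Fin 3 // (p.1 p.2 : ℕ) < n + 1}

/-- A 2-cell (unit square) of `Q_n`: a base vertex together with its normal direction
`d`; the square spans the two directions other than `d` from the base vertex. -/
def FaceCell := {p : Vtx n × Fin 3 // ∀ i, i ≠ p.2 → (p.1 i : ℕ) < n + 1}

noncomputable instance : Fintype (EdgeCell n) := by unfold EdgeCell; infer_instance
noncomputable instance : Fintype (FaceCell n) := by unfold FaceCell; infer_instance

/-- Move the vertex `v` one step in direction `i`. -/
def shift (v : Vtx n) (i : Fin 3) (h : (v i : ℕ) < n + 1) : Vtx n :=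
  Function.update v i ⟨(v i : ℕ) + 1, by omega⟩

/-- The edge `e` is one of the four sides of the square `f`. -/
def IsSide (f : FaceCell n) (e : EdgeCell n) : Prop :=
  e.1.2 ≠ f.1.2 ∧
    (e.1.1 = f.1.1 ∨
      ∃ (j : Fin 3) (h : (f.1.1 j : ℕ) < n + 1), j ≠ e.1.2 ∧ j ≠ f.1.2 ∧
        e.1.1 = shift n f.1.1 j h)

/-- The cellular boundary map `∂₁` over `ℤ/2`: an edge has its two endpoints as
boundary. -/
noncomputable def bd1 (z : EdgeCell n → ZMod 2) : Vtx n → ZMod 2 := fun v =>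
  ∑ e : EdgeCell n, (if v = e.1.1 ∨ v = shift n e.1.1 e.1.2 e.2 then z e else 0)

/-- The cellular boundary map `∂₂` over `ℤ/2`: a square has its four sides as
boundary. -/
noncomputable def bd2 (c : FaceCell n → ZMod 2) : EdgeCell n → ZMod 2 := fun e =>
  ∑ f : FaceCell n, (if IsSide n f e then c f else 0)

/-- A subcomplex of `Q_n` (containing all vertices), given by a set of edges and a set
of squares: every side of a square of the subcomplex is an edge of it. -/
def IsSubcomplex (E : Set (EdgeCell n)) (F : Set (FaceCell n)) : Prop :=
  ∀ f ∈ F, ∀ e : EdgeCell n, IsSide n f e → e ∈ E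

/-- The subcomplex `(E, F)` has trivial `ℤ/2` homology in dimensions 1 and 2:
`Z₂ = 0`, and every 1-cycle supported on `E` bounds a 2-chain supported on `F`. -/
def IsAcyclicComplex (E : Set (EdgeCell n)) (F : Set (FaceCell n)) : Prop :=
  (∀ c : FaceCell n → ZMod 2, (∀ f ∉ F, c f = 0) → bd2 n c = 0 → c = 0) ∧
  (∀ z : EdgeCell n → ZMod 2, (∀ e ∉ E, z e = 0) → bd1 n z = 0 →
    ∃ c : FaceCell n → ZMod 2, (∀ f ∉ F, c f = 0) ∧ bd2 n c = z)

/-- A 2-tree of `Q_n`: a subcomplex maximal with respect to having trivial `ℤ/2`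
homology in dimensions 1 and 2. -/
def Is2Tree (E : Set (EdgeCell n)) (F : Set (FaceCell n)) : Prop :=
  IsSubcomplex n E F ∧ IsAcyclicComplex n E F ∧
    ∀ (E' : Set (EdgeCell n)) (F' : Set (FaceCell n)), E ⊆ E' → F ⊆ F' →
      IsSubcomplex n E' F' → IsAcyclicComplex n E' F' → E' = E ∧ F' = F

/-!
A 2-tree `(E, F)` has `∂₂` injective on chains supported on `F`, i.e. `F` is independent in the
column matroid of `∂₂`. Enlarge `F` to a maximal independent `F'`: then chains supported on `F'`
already have every boundary that any 2-chain has. Since `H₁(Q_n; ℤ/2) = 0`, every 1-cycle is such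
a boundary, so (all edges, `F'`) is again acyclic, and maximality of the 2-tree forces `E` to be
all edges.

For `H₁(Q_n; ℤ/2) = 0`, join every vertex to the origin by its staircase path. The loop formed by
an edge and the staircase paths to its endpoints is a boundary: trivially when the edge lies on a
staircase path, and otherwise by induction across unit squares. Summing these loops over the
edges of a cycle `z` gives `z`: the staircase path to `v` is counted `(∂₁ z) v = 0` times.
-/

section IndependentSets

variable {K ι M : Type*} [DivisionRing K] [AddCommGroup M] [Module K M]

def IsIndepOn (d : (ι → K) →ₗ[K] M) (F : Set ι) : Prop :=
  ∀ c : ι → K, (∀ i ∉ F, c i = 0) → d c = 0 → c = 0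

theorem IsIndepOn.exists_maximal [Finite ι] {d : (ι → K) →ₗ[K] M} {F : Set ι}
    (hF : IsIndepOn d F) : ∃ F', F ⊆ F' ∧ Maximal (IsIndepOn d) F' :=
  (Set.toFinite {F | IsIndepOn d F}).exists_le_maximal hF

theorem Maximal.exists_supported_map_eq [Finite ι] {d : (ι → K) →ₗ[K] M} {F : Set ι}
    (hF : Maximal (IsIndepOn d) F) (c : ι → K) :
    ∃ c' : ι → K, (∀ i ∉ F, c' i = 0) ∧ d c' = d c := by
  classical
  let S : Submodule K M := (Submodule.pi Fᶜ fun _ => ⊥).map d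
  have hsingle : ∀ i, d (Pi.single i 1) ∈ S := by
    intro i
    by_cases hi : i ∈ F
    · refine ⟨Pi.single i 1, fun j hj => ?_, rfl⟩
      simp [show j ≠ i from fun h => hj (h ▸ hi)]
    · have hdep : ¬ IsIndepOn d (insert i F) := fun h =>
        hi (hF.2 h (Set.subset_insert i F) (Set.mem_insert i F))
      simp only [IsIndepOn, not_forall] at hdep
      obtain ⟨c, hc, hdc, hc0⟩ := hdep
      have hci : c i ≠ 0 := fun h0 => hc0 <| hF.1 c (fun j hj => by
        by_cases hji : j = i
        · exact hji ▸ h0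
        · exact hc j (by simp [hji, hj])) hdc
      refine ⟨(c i)⁻¹ • (c i • Pi.single i 1 - c), fun j hj => ?_, ?_⟩
      · by_cases hji : j = i
        · simp [hji]
        · simp [hji, hc j (by simpa [hji] using hj)]
      · simp [hdc, smul_smul, inv_mul_cancel₀ hci]
  have hrange : LinearMap.range d ≤ S := by
    rw [LinearMap.range_eq_map, ← (Pi.basisFun K ι).span_eq, Submodule.map_span_le]
    rintro _ ⟨i, rfl⟩
    rw [Pi.basisFun_apply]
    exact hsingle i
  obtain ⟨c', hc', h⟩ := hrange (LinearMap.mem_range_self d c)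
  exact ⟨c', fun i hi => by simpa using hc' i hi, h⟩

end IndependentSets

open Function

theorem Fin3.cases (i : Fin 3) : i = 0 ∨ i = 1 ∨ i = 2 := by
  fin_cases i <;> simp

theorem Fin3.exists_ne_ne (i j : Fin 3) : ∃ d, i ≠ d ∧ j ≠ d := by
  revert i j; decide

theorem Fin3.eq_or_eq_of_ne {i j d k : Fin 3} (hid : i ≠ d) (hjd : j ≠ d) (hij : i ≠ j)
    (hkd : k ≠ d) : k = i ∨ k = j := by
  revert i j d k; decide

theorem Vtx.ext_iff_val {v w : Vtx n} :
    v = w ↔ (v 0 : ℕ) = w 0 ∧ (v 1 : ℕ) = w 1 ∧ (v 2 : ℕ) = w 2 := by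
  simp [funext_iff, Fin.forall_fin_succ, Fin.ext_iff]

theorem shift_apply_self (v : Vtx n) (i : Fin 3) (h : (v i : ℕ) < n + 1) :
    (shift n v i h i : ℕ) = v i + 1 := by
  simp [shift]

theorem shift_apply_of_ne (v : Vtx n) {i j : Fin 3} (h : (v i : ℕ) < n + 1) (hj : j ≠ i) :
    shift n v i h j = v j :=
  update_of_ne hj _ _

theorem shift_apply_val (v : Vtx n) (i : Fin 3) (h : (v i : ℕ) < n + 1) (j : Fin 3) :
    (shift n v i h j : ℕ) = if j = i then (v i : ℕ) + 1 else v j := by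
  split_ifs with hj
  · exact hj ▸ shift_apply_self n v i h
  · rw [shift_apply_of_ne n v h hj]

theorem shift_apply_lt_of_ne {v : Vtx n} {i j : Fin 3} (hi : (v i : ℕ) < n + 1)
    (hj : (v j : ℕ) < n + 1) (hji : j ≠ i) : (shift n v i hi j : ℕ) < n + 1 := by
  rwa [shift_apply_of_ne n v hi hji]

@[simp]
theorem shift_ne (v : Vtx n) (i : Fin 3) (h : (v i : ℕ) < n + 1) : shift n v i h ≠ v :=
  fun he => by
    have := shift_apply_self n v i h
    rw [he] at this
    omega

@[simp]
theorem ne_shift (v : Vtx n) (i : Fin 3) (h : (v i : ℕ) < n + 1) : v ≠ shift n v i h :=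
  (shift_ne n v i h).symm

theorem shift_comm (v : Vtx n) {i j : Fin 3} (hij : i ≠ j) (hi : (v i : ℕ) < n + 1)
    (hj : (v j : ℕ) < n + 1) (hi' : (shift n v j hj i : ℕ) < n + 1)
    (hj' : (shift n v i hi j : ℕ) < n + 1) :
    shift n (shift n v j hj) i hi' = shift n (shift n v i hi) j hj' := by
  funext k
  rcases eq_or_ne k i with rfl | hki
  · ext; simp [shift, hij]
  rcases eq_or_ne k j with rfl | hkj
  · ext; simp [shift, hij.symm]
  simp [shift, hki, hkj]

theorem Vtx.induction_on_coord (i : Fin 3) {P : Vtx n → Prop}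
    (zero : ∀ v : Vtx n, (v i : ℕ) = 0 → P v)
    (succ : ∀ v h, P v → P (shift n v i h)) (v : Vtx n) : P v := by
  suffices ∀ k (v : Vtx n), (v i : ℕ) = k → P v from this _ v rfl
  intro k
  induction k with
  | zero => exact zero
  | succ k ih =>
    intro v hv
    have hk : k < n + 2 := by have := (v i).2; omega
    have hw : (update v i ⟨k, hk⟩ i : ℕ) < n + 1 := by simp; omega
    convert succ _ hw (ih _ (by simp))
    funext j
    rcases eq_or_ne j i with rfl | hj
    · ext; simp [shift, hv]
    · simp [shift, hj]

def EdgeCell.mk (v : Vtx n) (i : Fin 3) (h : (v i : ℕ) < n + 1) : EdgeCell n := ⟨(v, i), h⟩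

@[simp]
theorem EdgeCell.val_mk (v : Vtx n) (i : Fin 3) (h : (v i : ℕ) < n + 1) :
    (EdgeCell.mk n v i h).1 = (v, i) :=
  rfl

theorem EdgeCell.ext_iff {e e' : EdgeCell n} : e = e' ↔ e.1 = e'.1 :=
  Subtype.ext_iff

noncomputable def bd2Linear : (FaceCell n → ZMod 2) →ₗ[ZMod 2] (EdgeCell n → ZMod 2) where
  toFun := bd2 n
  map_add' c c' := by
    ext e
    simp only [bd2, Pi.add_apply, ← Finset.sum_add_distrib, ite_add_ite, add_zero]
  map_smul' a c := by
    ext e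
    simp only [bd2, Pi.smul_apply, smul_eq_mul, Finset.mul_sum, mul_ite, mul_zero,
      RingHom.id_apply]

theorem bd2_single (f : FaceCell n) (e : EdgeCell n) :
    bd2 n (Pi.single f 1) e = if IsSide n f e then 1 else 0 := by
  rw [bd2, Finset.sum_eq_single f] <;> simp +contextual

theorem bd2_single_face {f : FaceCell n} {w : Vtx n} {d i j : Fin 3} (hf : f.1 = (w, d))
    (hi : i ≠ d) (hj : j ≠ d) (hij : i ≠ j) (hwi : (w i : ℕ) < n + 1) (hwj : (w j : ℕ) < n + 1) :
    bd2 n (Pi.single f 1) =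
      Pi.single (EdgeCell.mk n w i hwi) 1 + Pi.single (EdgeCell.mk n w j hwj) 1 +
        Pi.single (EdgeCell.mk n (shift n w i hwi) j (shift_apply_lt_of_ne n hwi hwj hij.symm)) 1 +
        Pi.single (EdgeCell.mk n (shift n w j hwj) i (shift_apply_lt_of_ne n hwj hwi hij)) 1 := by
  funext e
  rw [bd2_single]
  obtain ⟨⟨w', d'⟩, hw⟩ := f
  obtain ⟨rfl, rfl⟩ := Prod.ext_iff.mp hf
  simp only [IsSide, Pi.add_apply, Pi.single_apply, EdgeCell.ext_iff, EdgeCell.val_mk,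
    Prod.ext_iff]
  generalize e.1.1 = v, e.1.2 = k
  rcases eq_or_ne k d' with rfl | hkd
  · simp [hi.symm, hj.symm]
  have hshift : ∀ {l m} (hl : l ≠ d') (hm : m ≠ d') (hlm : l ≠ m),
      (∃ l' h, l' ≠ l ∧ l' ≠ d' ∧ v = shift n w' l' h) ↔ v = shift n w' m (hw m hm) := by
    intro l m hl hm hlm
    constructor
    · rintro ⟨l', hl', hl'l, hl'd, rfl⟩
      obtain rfl := (Fin3.eq_or_eq_of_ne hl hm hlm hl'd).resolve_left hl'l
      rfl
    · rintro rfl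
      exact ⟨m, _, hlm.symm, hm, rfl⟩
  rcases Fin3.eq_or_eq_of_ne hi hj hij hkd with rfl | rfl
  · simp only [hshift hi hj hij]
    split_ifs <;> simp_all
  · simp only [hshift hj hi hij.symm]
    split_ifs <;> simp_all

/-- The path from the origin to `v` running first along axis 0, then axis 1, then axis 2. -/
def stairPath (v : Vtx n) : EdgeCell n → ZMod 2 := fun e =>
  if ((e.1.2 : ℕ) = 0 ∧ (e.1.1 1 : ℕ) = 0 ∧ (e.1.1 2 : ℕ) = 0 ∧ (e.1.1 0 : ℕ) < v 0) ∨
      ((e.1.2 : ℕ) = 1 ∧ (e.1.1 0 : ℕ) = v 0 ∧ (e.1.1 2 : ℕ) = 0 ∧ (e.1.1 1 : ℕ) < v 1) ∨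
      ((e.1.2 : ℕ) = 2 ∧ (e.1.1 0 : ℕ) = v 0 ∧ (e.1.1 1 : ℕ) = v 1 ∧ (e.1.1 2 : ℕ) < v 2)
  then 1 else 0

theorem stairPath_shift (v : Vtx n) (i : Fin 3) (h : (v i : ℕ) < n + 1)
    (hv : ∀ j, i < j → (v j : ℕ) = 0) :
    stairPath n (shift n v i h) = stairPath n v + Pi.single (EdgeCell.mk n v i h) 1 := by
  funext e
  have he := e.1.2.isLt
  have h1 := hv 1
  have h2 := hv 2
  simp only [stairPath, Pi.add_apply, Pi.single_apply, EdgeCell.ext_iff, EdgeCell.val_mk,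
    Prod.ext_iff, Vtx.ext_iff_val, Fin.ext_iff]
  rcases Fin3.cases i with rfl | rfl | rfl <;>
    simp (config := {decide := true}) only [shift_apply_val, true_implies, false_implies]
      at h1 h2 ⊢ <;>
    split_ifs <;> (try simp) <;> omega

def LoopBounds (v : Vtx n) (d : Fin 3) : Prop :=
  ∀ h : (v d : ℕ) < n + 1, Pi.single (EdgeCell.mk n v d h) 1 + stairPath n v +
    stairPath n (shift n v d h) ∈ LinearMap.range (bd2Linear n)

theorem loopBounds_of_stairPath (v : Vtx n) (d : Fin 3) (hv : ∀ j, d < j → (v j : ℕ) = 0) :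
    LoopBounds n v d := by
  intro h
  rw [stairPath_shift n v d h hv]
  convert (LinearMap.range (bd2Linear n)).zero_mem using 1
  abel_nf
  simp [two_mul, ZModModule.add_self]

theorem loopBounds_two (v : Vtx n) : LoopBounds n v 2 :=
  loopBounds_of_stairPath n v 2 fun j hj => absurd hj (by omega)

theorem loopBounds_one (v : Vtx n) (hv : (v 2 : ℕ) = 0) : LoopBounds n v 1 :=
  loopBounds_of_stairPath n v 1 fun j hj => by
    obtain rfl : j = 2 := by omega
    exact hv

theorem loopBounds_square (w : Vtx n) {i j : Fin 3} (hij : i ≠ j) (hi : (w i : ℕ) < n + 1)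
    (hj : (w j : ℕ) < n + 1) (h₁ : LoopBounds n w i) (h₂ : LoopBounds n w j)
    (h₃ : LoopBounds n (shift n w i hi) j) : LoopBounds n (shift n w j hj) i := by
  intro h₄
  obtain ⟨d, hid, hjd⟩ := Fin3.exists_ne_ne i j
  obtain ⟨f, hf⟩ : ∃ f : FaceCell n, f.1 = (w, d) := ⟨⟨(w, d), fun k hk => by
    rcases Fin3.eq_or_eq_of_ne hid hjd hij hk with rfl | rfl <;> assumption⟩, rfl⟩
  have hbd := LinearMap.mem_range_self (bd2Linear n) (Pi.single f 1)
  change bd2 n _ ∈ _ at hbd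
  rw [bd2_single_face n hf hid hjd hij hi hj] at hbd
  have hj' := shift_apply_lt_of_ne n hi hj hij.symm
  -- the boundary of the square plus three of the loops around its sides is the fourth loop
  convert add_mem (add_mem (add_mem hbd (h₁ hi)) (h₂ hj)) (h₃ hj') using 1
  rw [shift_comm n w hij hi hj h₄ hj']
  abel_nf
  simp [two_mul, ZModModule.add_self]

theorem LoopBounds.shift_two {w : Vtx n} {d : Fin 3} (hd : d ≠ 2) (h2 : (w 2 : ℕ) < n + 1)
    (hw : LoopBounds n w d) : LoopBounds n (shift n w 2 h2) d := by
  intro h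
  have hwd : (w d : ℕ) < n + 1 := by rwa [shift_apply_of_ne n w h2 hd] at h
  exact loopBounds_square n w hd hwd h2 hw (loopBounds_two n w) (loopBounds_two n _) h

theorem LoopBounds.shift_one {w : Vtx n} (h1 : (w 1 : ℕ) < n + 1) (hz : (w 2 : ℕ) = 0)
    (hw : LoopBounds n w 0) : LoopBounds n (shift n w 1 h1) 0 := by
  intro h
  have hw0 : (w 0 : ℕ) < n + 1 := by rwa [shift_apply_of_ne n w h1 (by decide)] at h
  refine loopBounds_square n w (by decide) hw0 h1 hw (loopBounds_one n w hz)
    (loopBounds_one n _ ?_) h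
  rwa [shift_apply_of_ne n w hw0 (by decide)]

theorem loopBounds (v : Vtx n) (d : Fin 3) : LoopBounds n v d := by
  rcases Fin3.cases d with rfl | rfl | rfl
  · refine Vtx.induction_on_coord n 2 (fun v hv2 => ?_)
      (fun v h2 (ih : LoopBounds n v 0) => ih.shift_two n (by decide) h2) v
    revert hv2
    refine Vtx.induction_on_coord n 1 (fun v hv1 hv2 => ?_)
      (fun v h1 (ih : (v 2 : ℕ) = 0 → LoopBounds n v 0) hv2 => ?_) v
    · refine loopBounds_of_stairPath n v 0 fun j hj => ?_
      rcases Fin3.cases j with rfl | rfl | rfl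
      exacts [absurd hj (lt_irrefl 0), hv1, hv2]
    · have hv2' : (v 2 : ℕ) = 0 := by rwa [shift_apply_of_ne n v h1 (by decide)] at hv2
      exact (ih hv2').shift_one n h1 hv2'
  · exact Vtx.induction_on_coord n 2 (fun v hv2 => loopBounds_one n v hv2)
      (fun v h2 (ih : LoopBounds n v 1) => ih.shift_two n (by decide) h2) v
  · exact loopBounds_two n v

theorem sum_smul_endpoints {M : Type*} [AddCommMonoid M] [Module (ZMod 2) M]
    (z : EdgeCell n → ZMod 2) (g : Vtx n → M) :
    ∑ e, z e • (g e.1.1 + g (shift n e.1.1 e.1.2 e.2)) = ∑ v, bd1 n z v • g v := by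
  simp only [bd1, Finset.sum_smul, ite_smul, zero_smul]
  rw [Finset.sum_comm]
  refine Finset.sum_congr rfl fun e _ => ?_
  have hpair : Finset.univ.filter (fun v => v = e.1.1 ∨ v = shift n e.1.1 e.1.2 e.2) =
      {e.1.1, shift n e.1.1 e.1.2 e.2} := by
    ext; simp
  rw [← Finset.sum_filter, hpair, Finset.sum_pair (ne_shift n _ _ _), smul_add]

theorem mem_range_bd2_of_bd1_eq_zero (z : EdgeCell n → ZMod 2) (hz : bd1 n z = 0) :
    z ∈ LinearMap.range (bd2Linear n) := by
  have hcancel :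
      ∑ e, z e • (stairPath n e.1.1 + stairPath n (shift n e.1.1 e.1.2 e.2)) = 0 := by
    rw [sum_smul_endpoints, hz]
    simp
  have hz : z = ∑ e, z e • (Pi.single e 1 + stairPath n e.1.1 +
      stairPath n (shift n e.1.1 e.1.2 e.2)) := calc
    z = ∑ e, z e • Pi.single e 1 := by
      simp only [← Pi.single_smul', smul_eq_mul, mul_one, Finset.univ_sum_single]
    _ = ∑ e, z e • Pi.single e 1 +
        ∑ e, z e • (stairPath n e.1.1 + stairPath n (shift n e.1.1 e.1.2 e.2)) := by
      rw [hcancel, add_zero]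
    _ = _ := by simp only [← Finset.sum_add_distrib, ← smul_add, add_assoc]
  rw [hz]
  exact Submodule.sum_mem _ fun e _ => Submodule.smul_mem _ _ (loopBounds n e.1.1 e.1.2 e.2)

/-- Every 2-tree of the cubical complex `Q_n` contains the entire 1-skeleton of
`Q_n`. -/
theorem stmt_16 (E : Set (EdgeCell n)) (F : Set (FaceCell n)) (h : Is2Tree n E F) :
    E = Set.univ := by
  obtain ⟨-, hacyc, hmax⟩ := h
  obtain ⟨F', hFF', hF'⟩ := IsIndepOn.exists_maximal (d := bd2Linear n) hacyc.1
  have hacyc' : IsAcyclicComplex n Set.univ F' := by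
    refine ⟨hF'.1, fun z _ hz => ?_⟩
    obtain ⟨c, rfl⟩ := mem_range_bd2_of_bd1_eq_zero n z hz
    exact Maximal.exists_supported_map_eq hF' c
  exact (hmax _ _ (Set.subset_univ E) hFF' (fun _ _ _ _ => trivial) hacyc').1.symm

end Stmt16
end
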